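/- arXiv:2207.03004 — 2 statements merged into one kernel-verified Lean document; each statement's English description precedes it below -/
import Mathlib

section
/- Let S be a standard semigroup in ℤ^d, let T_• = {T_q} be a p-system of ideals in S, and let H be a truncating halfspace for Cone(S). Then lim_{q→∞} Vol_{ℝ^d}((T_q + Cone(S)) ∩ qH)/q^d = Vol_{ℝ^d}(Δ(S, T_•) ∩ H), where the limit is over powers q = p^e of p. (Indeed, Vol_{ℝ^d}((T_q + Cone(S)) ∩ qH)/q^d = Vol_{ℝ^d}(((1/q)T_q + Cone(S)) ∩ H), and the sets ((1/q)T_q + Cone(S)) ∩ H form an ascending chain of measurable sets whose union is Δ(S, T_•) ∩ H.) -/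
/-!
Statement 3: for a standard semigroup `S` in `ℤ^d`, a `p`-system `T_•` in `S` and a
truncating halfspace `H` for `Cone(S)`,
`lim_{q→∞} Vol((T_q + Cone(S)) ∩ qH)/q^d = Vol(Δ(S,T_•) ∩ H)`; indeed
`Vol((T_q + Cone(S)) ∩ qH)/q^d = Vol(((1/q)T_q + Cone(S)) ∩ H)`, and the sets
`((1/q)T_q + Cone(S)) ∩ H` form an ascending chain whose union is `Δ(S,T_•) ∩ H`.
-/

open Filter MeasureTheory
open Pointwise

noncomputable section

/-- The coercion of an integer vector to a real vector. -/
def zr {d : ℕ} (u : Fin d → ℤ) : Fin d → ℝ := fun i => (u i : ℝ)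

/-- Inner product of `a : ℝ^d` with an integer vector. -/
def aip {d : ℕ} (a : Fin d → ℝ) (u : Fin d → ℤ) : ℝ := ∑ i, a i * (u i : ℝ)

/-- Inner product of two real vectors. -/
def rip {d : ℕ} (a u : Fin d → ℝ) : ℝ := ∑ i, a i * u i

/-- `Cone(S)`: the closure of the set of all `ℝ_{≥0}`-linear combinations of elements of `S`. -/
def coneOf {d : ℕ} (S : Set (Fin d → ℤ)) : Set (Fin d → ℝ) :=
  closure {x | ∃ (n : ℕ) (c : Fin n → ℝ) (v : Fin n → Fin d → ℤ),
    (∀ i, 0 ≤ c i) ∧ (∀ i, v i ∈ S) ∧ x = ∑ i, c i • zr (v i)}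

/-- `S` is a standard semigroup in `ℤ^d`, with pointedness of `Cone(S)` witnessed by the
vector `a`: `S` is a subsemigroup containing `0`, `S - S = ℤ^d`, and `⟨a,u⟩ > 0` for every
nonzero `u ∈ Cone(S)`. -/
structure IsStdSemigroup {d : ℕ} (S : Set (Fin d → ℤ)) (a : Fin d → ℝ) : Prop where
  zero_mem : (0 : Fin d → ℤ) ∈ S
  add_mem : ∀ u ∈ S, ∀ v ∈ S, u + v ∈ S
  sub_eq : ∀ w : Fin d → ℤ, ∃ u ∈ S, ∃ v ∈ S, w = u - v
  pointed : ∀ x ∈ coneOf S, x ≠ 0 → 0 < rip a x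

/-- A `p`-system of ideals in `S`, indexed by `e` (so `q = p^e`): each `T_q` is a semigroup
ideal of `S` contained in `S`, and `p·T_q ⊆ T_{pq}`. -/
structure IsPSystem {d : ℕ} (p : ℕ) (S : Set (Fin d → ℤ)) (T : ℕ → Set (Fin d → ℤ)) : Prop where
  subset : ∀ e, T e ⊆ S
  ideal : ∀ e, ∀ t ∈ T e, ∀ s ∈ S, t + s ∈ T e
  frob : ∀ e, ∀ t ∈ T e, (p : ℤ) • t ∈ T (e + 1)

/-- The `p`-body `Δ(S, T_•) = ⋃_q ((1/q)T_q + Cone(S))`. -/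
def pBody {d : ℕ} (p : ℕ) (S : Set (Fin d → ℤ)) (T : ℕ → Set (Fin d → ℤ)) :
    Set (Fin d → ℝ) :=
  ⋃ e : ℕ, {x | ∃ t ∈ T e, ∃ c ∈ coneOf S, x = ((p : ℝ) ^ e)⁻¹ • zr t + c}

section lems
variable {d : ℕ} {S : Set (Fin d → ℤ)} {a : Fin d → ℝ}

lemma rip_smul (r : ℝ) (x : Fin d → ℝ) : rip a (r • x) = r * rip a x := by
  simp [rip, Finset.mul_sum]; ring_nf; apply Finset.sum_congr rfl; intros; ring

lemma rip_continuous : Continuous (rip a (d := d)) := by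
  unfold rip; exact continuous_finset_sum _ fun i _ => continuous_const.mul (continuous_apply i)

lemma zr_mem_cone {s : Fin d → ℤ} (h : s ∈ S) : zr s ∈ coneOf S := by
  apply subset_closure
  exact ⟨1, fun _ => 1, fun _ => s, fun _ => zero_le_one, fun _ => h, by simp⟩

lemma cone_smul {r : ℝ} (hr : 0 ≤ r) {x : Fin d → ℝ} (hx : x ∈ coneOf S) :
    r • x ∈ coneOf S := by
  refine map_mem_closure (continuous_const_smul r) hx ?_
  rintro y ⟨n, c, v, hc, hv, rfl⟩
  exact ⟨n, fun i => r * c i, v, fun i => mul_nonneg hr (hc i), hv, by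
    rw [Finset.smul_sum]; simp [smul_smul]⟩

lemma cone_add {x y : Fin d → ℝ} (hx : x ∈ coneOf S) (hy : y ∈ coneOf S) :
    x + y ∈ coneOf S := by
  refine map_mem_closure₂ continuous_add hx hy ?_
  rintro u ⟨n, c, v, hc, hv, rfl⟩ w ⟨m, c', v', hc', hv', rfl⟩
  refine ⟨n + m, Fin.addCases c c', Fin.addCases v v', ?_, ?_, ?_⟩
  · intro i; induction i using Fin.addCases <;> simp [hc _, hc' _]
  · intro i; induction i using Fin.addCases <;> simp [hv _, hv' _]
  · rw [Fin.sum_univ_add]; simp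

lemma exists_eps (hpt : ∀ x ∈ coneOf S, x ≠ 0 → 0 < rip a x) :
    ∃ ε : ℝ, 0 < ε ∧ ∀ x ∈ coneOf S, ε * ‖x‖ ≤ rip a x := by
  set K : Set (Fin d → ℝ) := coneOf S ∩ Metric.sphere 0 1 with hK
  have hKc : IsCompact K := by
    apply Metric.isCompact_of_isClosed_isBounded
    · exact isClosed_closure.inter Metric.isClosed_sphere
    · exact (Metric.isBounded_sphere).subset (Set.inter_subset_right)
  rcases K.eq_empty_or_nonempty with hE | hNE
  · refine ⟨1, one_pos, fun x hx => ?_⟩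
    by_cases hx0 : x = 0
    · simp [hx0, rip]
    · exfalso
      have : ‖x‖⁻¹ • x ∈ K := by
        constructor
        · exact cone_smul (inv_nonneg.2 (norm_nonneg x)) hx
        · simp [norm_smul, abs_of_nonneg (inv_nonneg.2 (norm_nonneg x)),
            inv_mul_cancel₀ (norm_ne_zero_iff.2 hx0)]
      rw [hE] at this; exact this
  · obtain ⟨x₀, hx₀K, hmin⟩ := hKc.exists_isMinOn hNE rip_continuous.continuousOn
    have hx₀ne : x₀ ≠ 0 := by
      intro h; have := hx₀K.2; rw [h] at this; simp at this
    have hm : 0 < rip a x₀ := hpt x₀ hx₀K.1 hx₀ne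
    refine ⟨rip a x₀, hm, fun x hx => ?_⟩
    by_cases hx0 : x = 0
    · simp [hx0, rip]
    · have hnx : (0:ℝ) < ‖x‖ := norm_pos_iff.2 hx0
      have hy : ‖x‖⁻¹ • x ∈ K := by
        constructor
        · exact cone_smul (inv_nonneg.2 hnx.le) hx
        · simp [norm_smul, abs_of_nonneg (inv_nonneg.2 hnx.le), inv_mul_cancel₀ hnx.ne']
      have h2 : rip a x₀ ≤ ‖x‖⁻¹ * rip a x := by
        simpa [rip_smul] using hmin hy
      calc rip a x₀ * ‖x‖ ≤ (‖x‖⁻¹ * rip a x) * ‖x‖ :=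
            mul_le_mul_of_nonneg_right h2 hnx.le
        _ = rip a x := by field_simp
end lems

theorem stmt_3 {d : ℕ} (p : ℕ) (hp : p.Prime) (S : Set (Fin d → ℤ)) (a : Fin d → ℝ)
    (hS : IsStdSemigroup S a) (T : ℕ → Set (Fin d → ℤ)) (hT : IsPSystem p S T)
    (α : ℝ) (hα : 0 < α) :
    Tendsto
      (fun e : ℕ =>
        (volume ({x : Fin d → ℝ | ∃ t ∈ T e, ∃ c ∈ coneOf S, x = zr t + c} ∩
            {x : Fin d → ℝ | rip a x < (p : ℝ) ^ e * α})).toReal / (p : ℝ) ^ (e * d))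
      atTop
      (nhds ((volume (pBody p S T ∩ {x : Fin d → ℝ | rip a x < α})).toReal)) ∧
    (∀ e : ℕ,
      (volume ({x : Fin d → ℝ | ∃ t ∈ T e, ∃ c ∈ coneOf S, x = zr t + c} ∩
          {x : Fin d → ℝ | rip a x < (p : ℝ) ^ e * α})).toReal / (p : ℝ) ^ (e * d) =
        (volume ({x : Fin d → ℝ | ∃ t ∈ T e, ∃ c ∈ coneOf S, x = ((p : ℝ) ^ e)⁻¹ • zr t + c} ∩
          {x : Fin d → ℝ | rip a x < α})).toReal) ∧
    Monotone (fun e : ℕ =>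
      {x : Fin d → ℝ | ∃ t ∈ T e, ∃ c ∈ coneOf S, x = ((p : ℝ) ^ e)⁻¹ • zr t + c} ∩
        {x : Fin d → ℝ | rip a x < α}) ∧
    (⋃ e : ℕ,
      ({x : Fin d → ℝ | ∃ t ∈ T e, ∃ c ∈ coneOf S, x = ((p : ℝ) ^ e)⁻¹ • zr t + c} ∩
        {x : Fin d → ℝ | rip a x < α})) = pBody p S T ∩ {x : Fin d → ℝ | rip a x < α} := by
  have hp0 : (0:ℝ) < (p:ℝ) := by exact_mod_cast hp.pos
  have hq : ∀ e : ℕ, (0:ℝ) < (p:ℝ) ^ e := fun e => pow_pos hp0 e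
  -- Part 2
  have part2 : ∀ e : ℕ,
      (volume ({x : Fin d → ℝ | ∃ t ∈ T e, ∃ c ∈ coneOf S, x = zr t + c} ∩
          {x : Fin d → ℝ | rip a x < (p : ℝ) ^ e * α})).toReal / (p : ℝ) ^ (e * d) =
        (volume ({x : Fin d → ℝ | ∃ t ∈ T e, ∃ c ∈ coneOf S, x = ((p : ℝ) ^ e)⁻¹ • zr t + c} ∩
          {x : Fin d → ℝ | rip a x < α})).toReal := by
    intro e
    set q : ℝ := (p:ℝ) ^ e with hqdef
    have hq0 : (0:ℝ) < q := hq e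
    have hseteq :
        {x : Fin d → ℝ | ∃ t ∈ T e, ∃ c ∈ coneOf S, x = (q)⁻¹ • zr t + c} ∩
          {x : Fin d → ℝ | rip a x < α} =
        q⁻¹ • ({x : Fin d → ℝ | ∃ t ∈ T e, ∃ c ∈ coneOf S, x = zr t + c} ∩
          {x : Fin d → ℝ | rip a x < q * α}) := by
      ext x
      rw [Set.mem_smul_set_iff_inv_smul_mem₀ (inv_ne_zero hq0.ne'), inv_inv]
      constructor
      · rintro ⟨⟨t, ht, k, hk, rfl⟩, hlt⟩
        refine ⟨⟨t, ht, q • k, cone_smul hq0.le hk, ?_⟩, ?_⟩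
        · rw [smul_add, smul_smul, mul_inv_cancel₀ hq0.ne', one_smul]
        · rw [Set.mem_setOf_eq, rip_smul]
          exact (mul_lt_mul_iff_right₀ hq0).2 hlt
      · rintro ⟨⟨t, ht, k, hk, hx⟩, hlt⟩
        refine ⟨⟨t, ht, q⁻¹ • k, cone_smul (inv_nonneg.2 hq0.le) hk, ?_⟩, ?_⟩
        · have : x = q⁻¹ • (q • x) := by
            rw [smul_smul, inv_mul_cancel₀ hq0.ne', one_smul]
          rw [this, hx, smul_add]
        · rw [Set.mem_setOf_eq, rip_smul] at hlt
          exact lt_of_mul_lt_mul_left hlt hq0.le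
    rw [hseteq, Measure.addHaar_smul]
    have hfr : Module.finrank ℝ (Fin d → ℝ) = d := by simp
    rw [hfr, ENNReal.toReal_mul, ENNReal.toReal_ofReal (abs_nonneg _),
      abs_of_nonneg (by positivity)]
    rw [div_eq_mul_inv, mul_comm]
    congr 1
    rw [inv_pow, ← pow_mul]
  -- Part 3
  have part3 : Monotone (fun e : ℕ =>
      {x : Fin d → ℝ | ∃ t ∈ T e, ∃ c ∈ coneOf S, x = ((p : ℝ) ^ e)⁻¹ • zr t + c} ∩
        {x : Fin d → ℝ | rip a x < α}) := by
    apply monotone_nat_of_le_succ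
    intro e x ⟨⟨t, ht, k, hk, hx⟩, hlt⟩
    refine ⟨⟨(p:ℤ) • t, hT.frob e t ht, k, hk, ?_⟩, hlt⟩
    have hzr : zr ((p:ℤ) • t) = (p:ℝ) • zr t := by
      funext i; simp [zr]
    have hco : ((p:ℝ)^(e+1))⁻¹ * (p:ℝ) = ((p:ℝ)^e)⁻¹ := by
      rw [pow_succ, mul_inv, mul_assoc, inv_mul_cancel₀ hp0.ne', mul_one]
    rw [hzr, smul_smul, hco]; exact hx
  -- Part 4
  have part4 : (⋃ e : ℕ,
      ({x : Fin d → ℝ | ∃ t ∈ T e, ∃ c ∈ coneOf S, x = ((p : ℝ) ^ e)⁻¹ • zr t + c} ∩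
        {x : Fin d → ℝ | rip a x < α})) = pBody p S T ∩ {x : Fin d → ℝ | rip a x < α} := by
    rw [← Set.iUnion_inter]; rfl
  -- Finiteness
  obtain ⟨ε, hε, hbd⟩ := exists_eps hS.pointed
  have hfin : volume (pBody p S T ∩ {x : Fin d → ℝ | rip a x < α}) ≠ ⊤ := by
    have hsub : pBody p S T ∩ {x : Fin d → ℝ | rip a x < α} ⊆
        Metric.ball (0 : Fin d → ℝ) (α / ε + 1) := by
      rintro x ⟨hx, hlt⟩
      have hxc : x ∈ coneOf S := by
        rw [pBody] at hx
        obtain ⟨_, ⟨e, rfl⟩, t, ht, k, hk, rfl⟩ := hx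
        exact cone_add (cone_smul (inv_nonneg.2 (hq e).le) (zr_mem_cone (hT.subset e ht))) hk
      have h1 : ε * ‖x‖ ≤ rip a x := hbd x hxc
      have h2 : ‖x‖ < α / ε + 1 := by
        have : ε * ‖x‖ < α := lt_of_le_of_lt h1 hlt
        have h3 : ‖x‖ < α / ε := (lt_div_iff₀' hε).2 this
        linarith
      simpa [Metric.mem_ball, dist_zero_right] using h2
    exact ((measure_mono hsub).trans_lt measure_ball_lt_top).ne
  -- Part 1
  have hten := tendsto_measure_iUnion_atTop (μ := volume) part3
  rw [part4] at hten
  have hten2 := (ENNReal.tendsto_toReal hfin).comp hten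
  refine ⟨?_, part2, part3, part4⟩
  exact hten2.congr fun e => (part2 e).symm
  done

end
end

section
/- Let (R, m) be a Noetherian local ring of prime characteristic p, let N be an ideal of R, set A = R/N, and let I be an m-primary ideal of R. Then there exists a constant β > 0 such that 0 ≤ ℓ_R(R/I^{[p^e]}) − ℓ_A(A/I^{[p^e]}A) ≤ β · p^{e·dim N} for all e ≥ 0, where dim N denotes the Krull dimension of R/ann(N). -/
/-!
`I^{kq} ⊆ I^{[q]}` for a constant `k` (take `k = 1` for a principal ideal; the constants add up
under sums of ideals). For `J = I^{[q]}`, the exact sequence `0 → (N + J)/J → R/J → A/JA → 0`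
shows that `ℓ(R/J) - ℓ(A/JA) = ℓ((N + J)/J)`, and `(N + J)/J` is a quotient of `N/I^{kq}N`.
It therefore suffices to bound `ℓ(M/I^s M) ≤ C (s + 1)^d` for finitely generated `M` with
`dim M ≤ d`. Such bounds survive extensions, so by a prime filtration it suffices to treat
`M = R/p`. For `p = m` the length is at most one; otherwise pick `x ∈ I \ p`: multiplication by
`x` maps `M/I^s M` onto `xM` in `M/I^{s+1}M`, so
`ℓ(M/I^{s+1}M) ≤ ℓ(M/I^s M) + ℓ(M'/I^{s+1}M')` with `M' = R/(p + xR)` of dimension `< dim R/p`,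
and induction on `d` concludes.
-/

open Filter IsLocalRing

noncomputable section

/-- The length `ℓ_R(M)` of an `R`-module `M`, defined as the Krull dimension of its lattice
of submodules (i.e. the supremum of lengths of chains of submodules), valued in `ℕ∞`. -/
def mlen (R M : Type*) [Semiring R] [AddCommGroup M] [Module R M] : ℕ∞ :=
  WithBot.unbotD 0 (Order.krullDim (Submodule R M))

/-- The `q`-th Frobenius power `I^{[q]}` of an ideal `I`: the ideal generated by the
`q`-th powers of the elements of `I`. -/
def frobPow {R : Type*} [CommSemiring R] (I : Ideal R) (q : ℕ) : Ideal R :=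
  Ideal.span ((fun x : R => x ^ q) '' (I : Set R))

open Module Submodule

section Length

variable {R : Type*} [CommRing R] {M M' M'' : Type*}
  [AddCommGroup M] [Module R M] [AddCommGroup M'] [Module R M'] [AddCommGroup M''] [Module R M'']

theorem mlen_eq_length : mlen R M = Module.length R M := by
  rw [mlen, ← Module.coe_length, WithBot.unbotD_coe]

theorem mapQ_smul_top_surjective (W : Ideal R) {g : M →ₗ[R] M''} (hg : Function.Surjective g) :
    Function.Surjective (mapQ _ _ g (smul_top_le_comap_smul_top W g)) := by
  rw [← LinearMap.range_eq_top, range_mapQ, LinearMap.range_eq_top.mpr hg, Submodule.map_top,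
    range_mkQ]

theorem length_quotient_smul_top_le_of_surjective (W : Ideal R) {g : M →ₗ[R] M''}
    (hg : Function.Surjective g) :
    length R (M'' ⧸ W • (⊤ : Submodule R M'')) ≤ length R (M ⧸ W • (⊤ : Submodule R M)) :=
  length_le_of_surjective _ (mapQ_smul_top_surjective W hg)

-- `W'` may differ from `W` so that multiplication by `x ∈ I` can carry `I^s M` into `I^{s+1} M`.
theorem length_quotient_smul_top_le_of_exact (W' W : Ideal R) {f : M' →ₗ[R] M} {g : M →ₗ[R] M''}
    (hfg : Function.Exact f g) (hg : Function.Surjective g)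
    (hW : W' • ⊤ ≤ (W • ⊤ : Submodule R M).comap f) :
    length R (M ⧸ W • (⊤ : Submodule R M)) ≤
      length R (M' ⧸ W' • (⊤ : Submodule R M')) + length R (M'' ⧸ W • (⊤ : Submodule R M'')) := by
  set F := mapQ _ _ f hW
  have hFG : Function.Exact F (mapQ _ _ g (smul_top_le_comap_smul_top W g)) :=
    (hfg.exact_mapQ_iff hW _).mpr <| by
      rw [map_smul'', Submodule.map_top, LinearMap.range_eq_top.mpr hg]
      exact inf_le_right
  rw [length_eq_add_of_exact (LinearMap.range F).subtype _ (injective_subtype _)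
    (mapQ_smul_top_surjective W hg) (by rwa [LinearMap.exact_iff, range_subtype,
      ← LinearMap.exact_iff])]
  gcongr
  exact length_le_of_surjective F.rangeRestrict F.surjective_rangeRestrict

end Length

section QuotientRing

variable {R : Type*} [CommRing R]

theorem exact_smul_factor_sup_span (J : Ideal R) (x : R) :
    Function.Exact (x • LinearMap.id : R ⧸ J →ₗ[R] R ⧸ J)
      (factor (le_sup_left : J ≤ J ⊔ Ideal.span {x})) := by
  intro y
  obtain ⟨a, rfl⟩ := Ideal.Quotient.mk_surjective y
  simp only [Set.mem_range, LinearMap.smul_apply, LinearMap.id_apply]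
  show factor _ (J.mkQ a) = 0 ↔ _
  rw [factor_mk, mkQ_apply, Quotient.mk_eq_zero, Submodule.mem_sup]
  constructor
  · rintro ⟨j, hj, _, hy, rfl⟩
    obtain ⟨b, rfl⟩ := Ideal.mem_span_singleton'.mp hy
    refine ⟨Ideal.Quotient.mk J b, ?_⟩
    rw [Algebra.smul_def, Ideal.Quotient.algebraMap_eq, ← map_mul, Ideal.Quotient.eq]
    convert J.neg_mem hj using 1
    ring
  · rintro ⟨b, hb⟩
    obtain ⟨b, rfl⟩ := Ideal.Quotient.mk_surjective b
    rw [Algebra.smul_def, Ideal.Quotient.algebraMap_eq, ← map_mul, Ideal.Quotient.eq] at hb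
    refine ⟨a - x * b, ?_, x * b, Ideal.mem_span_singleton'.mpr ⟨b, mul_comm b x⟩,
      sub_add_cancel a _⟩
    convert J.neg_mem hb using 1
    ring

theorem ringKrullDim_quotient_sup_span_add_one_le {p : Ideal R} [p.IsPrime] {x : R}
    (hx : x ∉ p) : ringKrullDim (R ⧸ (p ⊔ Ideal.span {x})) + 1 ≤ ringKrullDim (R ⧸ p) :=
  ringKrullDim_succ_le_of_surjective (Ideal.Quotient.factor le_sup_left)
    (Ideal.Quotient.factor_surjective _) (r := Ideal.Quotient.mk p x)
    (mem_nonZeroDivisors_of_ne_zero (by rwa [Ne, Ideal.Quotient.eq_zero_iff_mem]))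
    (by
      rw [Ideal.Quotient.factor_mk, Ideal.Quotient.eq_zero_iff_mem]
      exact mem_sup_right (Ideal.mem_span_singleton_self x))

theorem length_quotient_ne_top_of_radical_eq [IsNoetherianRing R] [IsLocalRing R] {J : Ideal R}
    (hJ : J.radical = maximalIdeal R) : length R (R ⧸ J) ≠ ⊤ := by
  have hmin : maximalIdeal R ∈ J.minimalPrimes := by
    rw [Ideal.minimalPrimes_eq_subsingleton
      (Ideal.isPrimary_of_isMaximal_radical (hJ ▸ maximalIdeal.isMaximal R)), hJ]
    rfl
  have := IsLocalRing.quotient_artinian_of_mem_minimalPrimes_of_isLocalRing J hmin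
  rw [length_eq_of_surjective (S := R) (Ideal.Quotient.mk_surjective (I := J))]
  exact length_ne_top

theorem length_quotient_smul_top_self (J : Ideal R) :
    length R (R ⧸ (J • ⊤ : Submodule R R)) = length R (R ⧸ J) := by
  rw [Ideal.smul_eq_mul, Ideal.mul_top]

theorem length_quotient_map_eq (N J : Ideal R) :
    length (R ⧸ N) ((R ⧸ N) ⧸ J.map (Ideal.Quotient.mk N)) =
      length R ((R ⧸ N) ⧸ (J • ⊤ : Submodule R (R ⧸ N))) := by
  rw [← length_eq_of_surjective (S := R) Ideal.Quotient.mk_surjective, Ideal.smul_top_eq_map]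
  exact ((Quotient.restrictScalarsEquiv R _).length_eq).symm

theorem length_quotient_map_le (N J : Ideal R) :
    length (R ⧸ N) ((R ⧸ N) ⧸ J.map (Ideal.Quotient.mk N)) ≤ length R (R ⧸ J) := by
  rw [length_quotient_map_eq, ← length_quotient_smul_top_self]
  exact length_quotient_smul_top_le_of_surjective J (mkQ_surjective N)

theorem length_quotient_le_add {N J W : Ideal R} (hWJ : W ≤ J) :
    length R (R ⧸ J) ≤ length R (N ⧸ (W • ⊤ : Submodule R N)) +
      length (R ⧸ N) ((R ⧸ N) ⧸ J.map (Ideal.Quotient.mk N)) := by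
  rw [length_quotient_map_eq, ← length_quotient_smul_top_self]
  refine length_quotient_smul_top_le_of_exact W J (LinearMap.exact_subtype_mkQ N)
    (mkQ_surjective N) (map_le_iff_le_comap.mp ?_)
  rw [map_smul'']
  exact smul_mono hWJ le_top

end QuotientRing

section HilbertSamuel

variable {R : Type*} [CommRing R]

def HasHilbertSamuelBound (I : Ideal R) (M : Type*) [AddCommGroup M] [Module R M] (d : ℕ) :
    Prop :=
  ∃ C : ℕ, ∀ s : ℕ, length R (M ⧸ (I ^ s • ⊤ : Submodule R M)) ≤ (C * (s + 1) ^ d : ℕ)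

variable {I : Ideal R} {d : ℕ} {M M' M'' : Type*}
  [AddCommGroup M] [Module R M] [AddCommGroup M'] [Module R M'] [AddCommGroup M''] [Module R M'']

theorem HasHilbertSamuelBound.of_surjective {g : M →ₗ[R] M''} (hg : Function.Surjective g)
    (h : HasHilbertSamuelBound I M d) : HasHilbertSamuelBound I M'' d :=
  let ⟨C, hC⟩ := h
  ⟨C, fun s => (length_quotient_smul_top_le_of_surjective _ hg).trans (hC s)⟩

theorem HasHilbertSamuelBound.of_exact {f : M' →ₗ[R] M} {g : M →ₗ[R] M''}
    (hfg : Function.Exact f g) (hg : Function.Surjective g)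
    (h' : HasHilbertSamuelBound I M' d) (h'' : HasHilbertSamuelBound I M'' d) :
    HasHilbertSamuelBound I M d := by
  obtain ⟨C', hC'⟩ := h'
  obtain ⟨C'', hC''⟩ := h''
  refine ⟨C' + C'', fun s => ?_⟩
  refine (length_quotient_smul_top_le_of_exact _ _ hfg hg
    (smul_top_le_comap_smul_top _ f)).trans ?_
  rw [add_mul, Nat.cast_add]
  exact add_le_add (hC' s) (hC'' s)

theorem hasHilbertSamuelBound_of_subsingleton [Subsingleton M] : HasHilbertSamuelBound I M d :=
  ⟨0, fun s => by
    rw [length_eq_zero_iff.mpr inferInstance]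
    exact zero_le⟩

theorem hasHilbertSamuelBound_of_isSimpleModule [IsSimpleModule R M] :
    HasHilbertSamuelBound I M d :=
  ⟨1, fun s => calc
    length R (M ⧸ (I ^ s • ⊤ : Submodule R M)) ≤ length R M :=
      length_le_of_surjective _ (mkQ_surjective _)
    _ = 1 := length_eq_one R M
    _ ≤ (1 * (s + 1) ^ d : ℕ) := by rw [one_mul]; exact_mod_cast Nat.one_le_pow _ _ s.succ_pos⟩

theorem hasHilbertSamuelBound_of_forall_quotient_prime [IsNoetherianRing R]
    (hprime : ∀ p : PrimeSpectrum R, ringKrullDim (R ⧸ p.asIdeal) ≤ d →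
      HasHilbertSamuelBound I (R ⧸ p.asIdeal) d)
    [Module.Finite R M] (hM : supportDim R M ≤ d) : HasHilbertSamuelBound I M d := by
  revert hM
  induction ‹Module.Finite R M› using IsNoetherianRing.induction_on_isQuotientEquivQuotientPrime R
    with
  | subsingleton N => exact fun _ => hasHilbertSamuelBound_of_subsingleton
  | quotient N p e =>
    intro hN
    rw [supportDim_eq_of_equiv e, supportDim_quotient_eq_ringKrullDim] at hN
    exact (hprime p hN).of_surjective e.symm.surjective
  | exact N₁ N₂ N₃ f g hf hg hfg h₁ h₃ =>
    exact fun hN => .of_exact hfg hg (h₁ ((supportDim_le_of_injective f hf).trans hN))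
      (h₃ ((supportDim_le_of_surjective g hg).trans hN))

theorem HasHilbertSamuelBound.of_quotient_sup_span {J : Ideal R} {x : R} (hx : x ∈ I)
    (h : HasHilbertSamuelBound I (R ⧸ (J ⊔ Ideal.span {x})) d) :
    HasHilbertSamuelBound I (R ⧸ J) (d + 1) := by
  obtain ⟨C, hC⟩ := h
  refine ⟨C, fun s => ?_⟩
  induction s with
  | zero =>
    rw [pow_zero, Ideal.one_eq_top, Submodule.top_smul, length_eq_zero]
    exact zero_le
  | succ s ih =>
    have hW : I ^ s • ⊤ ≤ (I ^ (s + 1) • ⊤ : Submodule R (R ⧸ J)).comap (x • LinearMap.id) :=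
      fun u hu => by
        rw [Submodule.mem_comap, pow_succ', mul_smul]
        exact smul_mem_smul hx hu
    have hpow : (s + 1) ^ d ≤ (s + 1 + 1) ^ d := Nat.pow_le_pow_left (s + 1).le_succ d
    calc _ ≤ _ := length_quotient_smul_top_le_of_exact _ _ (exact_smul_factor_sup_span J x)
          (factor_surjective _) hW
      _ ≤ (C * (s + 1) ^ (d + 1) : ℕ) + (C * (s + 1 + 1) ^ d : ℕ) := add_le_add ih (hC _)
      _ ≤ (C * (s + 1 + 1) ^ (d + 1) : ℕ) := by
        rw [← Nat.cast_add, Nat.cast_le]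
        calc C * (s + 1) ^ (d + 1) + C * (s + 1 + 1) ^ d
            = C * ((s + 1) ^ d * (s + 1)) + C * (s + 1 + 1) ^ d := by ring
          _ ≤ C * ((s + 1 + 1) ^ d * (s + 1)) + C * (s + 1 + 1) ^ d := by gcongr
          _ = C * (s + 1 + 1) ^ (d + 1) := by ring

variable [IsNoetherianRing R] [IsLocalRing R]

theorem hasHilbertSamuelBound_quotient_prime (hI : I.radical = maximalIdeal R) (d : ℕ)
    (p : PrimeSpectrum R) (hp : ringKrullDim (R ⧸ p.asIdeal) ≤ d) :
    HasHilbertSamuelBound I (R ⧸ p.asIdeal) d := by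
  induction d using Nat.strong_induction_on generalizing p with
  | _ d ih =>
    obtain ⟨p, hp_prime⟩ := p
    by_cases hpm : p = maximalIdeal R
    · subst hpm
      have : IsSimpleModule R (R ⧸ maximalIdeal R) :=
        isSimpleModule_iff_isCoatom.mpr (maximalIdeal.isMaximal R).out
      exact hasHilbertSamuelBound_of_isSimpleModule
    obtain ⟨x, hxI, hxp⟩ : ∃ x ∈ I, x ∉ p := Set.not_subset.mp fun hIp => hpm <|
      le_antisymm (le_maximalIdeal hp_prime.ne_top) (hI ▸ hp_prime.radical_le_iff.mpr hIp)
    have hpx : p ⊔ Ideal.span {x} ≤ maximalIdeal R :=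
      sup_le (le_maximalIdeal hp_prime.ne_top)
        ((Ideal.span_singleton_le_iff_mem _).mpr (hI ▸ Ideal.le_radical hxI))
    have : Nontrivial (R ⧸ (p ⊔ Ideal.span {x})) := Ideal.Quotient.nontrivial_iff.mpr
      (ne_top_of_le_ne_top (maximalIdeal.isMaximal R).ne_top hpx)
    have hlt : ringKrullDim (R ⧸ (p ⊔ Ideal.span {x})) < d :=
      ENat.WithBot.add_one_le_natCast_iff.mp
        ((ringKrullDim_quotient_sup_span_add_one_le hxp).trans hp)
    obtain _ | d := d
    · exact absurd hlt (not_lt.mpr (by exact_mod_cast ringKrullDim_nonneg_of_nontrivial))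
    have hle : ringKrullDim (R ⧸ (p ⊔ Ideal.span {x})) ≤ d :=
      ENat.WithBot.lt_add_one_iff.mp (by exact_mod_cast hlt)
    refine HasHilbertSamuelBound.of_quotient_sup_span hxI ?_
    exact hasHilbertSamuelBound_of_forall_quotient_prime (fun q hq => ih d d.lt_succ_self q hq)
      (by rwa [supportDim_quotient_eq_ringKrullDim])

theorem hasHilbertSamuelBound_of_supportDim_le (hI : I.radical = maximalIdeal R)
    [Module.Finite R M] (hM : supportDim R M ≤ d) : HasHilbertSamuelBound I M d :=
  hasHilbertSamuelBound_of_forall_quotient_prime (hasHilbertSamuelBound_quotient_prime hI d) hM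

end HilbertSamuel

section Frobenius

variable {R : Type*} [CommRing R] {I : Ideal R} {q : ℕ}

theorem frobPow_mono {J : Ideal R} (h : I ≤ J) (q : ℕ) : frobPow I q ≤ frobPow J q :=
  Ideal.span_mono (Set.image_mono h)

theorem frobPow_le (hq : q ≠ 0) : frobPow I q ≤ I :=
  Ideal.span_le.mpr <| by
    rintro _ ⟨x, hx, rfl⟩
    exact I.pow_mem_of_mem hx q (Nat.pos_of_ne_zero hq)

theorem radical_frobPow (hq : q ≠ 0) : (frobPow I q).radical = I.radical :=
  le_antisymm (Ideal.radical_mono (frobPow_le hq))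
    (Ideal.radical_le_radical_iff.mpr fun x hx => ⟨q, Ideal.subset_span ⟨x, hx, rfl⟩⟩)

theorem exists_pow_mul_le_frobPow (hI : I.FG) : ∃ k : ℕ, ∀ q, I ^ (k * q) ≤ frobPow I q := by
  induction I, hI using Submodule.fg_induction with
  | singleton x =>
    refine ⟨1, fun q => ?_⟩
    rw [one_mul, ← Ideal.span, Ideal.span_singleton_pow, Ideal.span_le, Set.singleton_subset_iff]
    exact Ideal.subset_span ⟨x, Ideal.mem_span_singleton_self x, rfl⟩
  | sup J K _ _ hJ hK =>
    obtain ⟨k₁, hk₁⟩ := hJ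
    obtain ⟨k₂, hk₂⟩ := hK
    refine ⟨k₁ + k₂, fun q => ?_⟩
    rw [add_mul]
    exact Ideal.sup_pow_add_le_pow_sup_pow.trans <| sup_le
      ((hk₁ q).trans (frobPow_mono le_sup_left q)) ((hk₂ q).trans (frobPow_mono le_sup_right q))

end Frobenius

theorem mul_add_one_pow_le {k q : ℕ} (hq : q ≠ 0) (d : ℕ) :
    (k * q + 1) ^ d ≤ (k + 1) ^ d * q ^ d := by
  rw [← mul_pow, add_one_mul]
  exact Nat.pow_le_pow_left (Nat.add_le_add_left (Nat.one_le_iff_ne_zero.mpr hq) _) d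

theorem stmt_8_general (R : Type*) [CommRing R] [IsNoetherianRing R] [IsLocalRing R]
    (p : ℕ) (hp : p.Prime) (N I : Ideal R)
    (hprim : I.radical = maximalIdeal R)
    (dN : ℕ) (hdN : ringKrullDim (R ⧸ Module.annihilator R ↥N) = dN) :
    ∃ β : ℝ, 0 < β ∧ ∀ e : ℕ, ∃ m n : ℕ,
      mlen R (R ⧸ frobPow I (p ^ e)) = m ∧
      mlen (R ⧸ N) ((R ⧸ N) ⧸ Ideal.map (Ideal.Quotient.mk N) (frobPow I (p ^ e))) = n ∧
      n ≤ m ∧ (m : ℝ) - (n : ℝ) ≤ β * (p : ℝ) ^ (e * dN) := by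
  obtain ⟨k, hk⟩ := exists_pow_mul_le_frobPow (IsNoetherian.noetherian I)
  obtain ⟨C, hC⟩ := hasHilbertSamuelBound_of_supportDim_le hprim (M := N) (d := dN)
    (by rw [supportDim_eq_ringKrullDim_quotient_annihilator, hdN])
  refine ⟨C * (k + 1) ^ dN + 1, by positivity, fun e => ?_⟩
  have hq : p ^ e ≠ 0 := pow_ne_zero e hp.ne_zero
  have hm := length_quotient_ne_top_of_radical_eq (J := frobPow I (p ^ e))
    (by rw [radical_frobPow hq, hprim])
  have hnm := length_quotient_map_le N (frobPow I (p ^ e))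
  have hmn := (length_quotient_le_add (N := N) (hk (p ^ e))).trans
    (add_le_add (hC (k * p ^ e)) le_rfl)
  lift length R (R ⧸ frobPow I (p ^ e)) to ℕ using hm with m hm_eq
  lift length (R ⧸ N) ((R ⧸ N) ⧸ (frobPow I (p ^ e)).map (Ideal.Quotient.mk N)) to ℕ
    using ne_top_of_le_ne_top (ENat.natCast_ne_top m) hnm with n hn_eq
  refine ⟨m, n, mlen_eq_length.trans hm_eq.symm, mlen_eq_length.trans hn_eq.symm,
    by exact_mod_cast hnm, ?_⟩
  have hmn' : m ≤ C * (k + 1) ^ dN * p ^ (e * dN) + n := calc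
    m ≤ C * (k * p ^ e + 1) ^ dN + n := by exact_mod_cast hmn
    _ ≤ C * ((k + 1) ^ dN * (p ^ e) ^ dN) + n := by gcongr; exact mul_add_one_pow_le hq dN
    _ = C * (k + 1) ^ dN * p ^ (e * dN) + n := by ring
  have hP : (0 : ℝ) ≤ (p : ℝ) ^ (e * dN) := by positivity
  have hmn'' : (m : ℝ) ≤ C * (k + 1) ^ dN * (p : ℝ) ^ (e * dN) + n := by exact_mod_cast hmn'
  nlinarith

theorem stmt_8 (R : Type*) [CommRing R] [IsNoetherianRing R] [IsLocalRing R]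
    (p : ℕ) (hp : p.Prime) [CharP R p] (N I : Ideal R)
    (hprim : I.radical = maximalIdeal R)
    (dN : ℕ) (hdN : ringKrullDim (R ⧸ Module.annihilator R ↥N) = dN) :
    ∃ β : ℝ, 0 < β ∧ ∀ e : ℕ, ∃ m n : ℕ,
      mlen R (R ⧸ frobPow I (p ^ e)) = m ∧
      mlen (R ⧸ N) ((R ⧸ N) ⧸ Ideal.map (Ideal.Quotient.mk N) (frobPow I (p ^ e))) = n ∧
      n ≤ m ∧ (m : ℝ) - (n : ℝ) ≤ β * (p : ℝ) ^ (e * dN) :=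
  stmt_8_general R p hp N I hprim dN hdN

end
end
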